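/- The function C_G(ρ,σ) = √(1 - G(ρ,σ)) is a metric on the set of density matrices, where G is the superfidelity. In particular it satisfies the triangle inequality C_G(ρ,τ) ≤ C_G(ρ,σ) + C_G(σ,τ). -/

import Mathlib

/-!
Superfidelity is an inner product of unit vectors: a density matrix `ρ` is sent to the pair
`(ρ, √(1 - tr ρ²))` in `ℂ^(N×N) ⊕ ℝ`, which has norm `tr ρ² + (1 - tr ρ²) = 1` because
`tr ρ² = ∑ λᵢ² ≤ (∑ λᵢ)² = 1` for the eigenvalues `λᵢ ≥ 0` of `ρ`, and `Re tr(ρσ)` is the real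
Frobenius inner product of `ρ` and `σ`. For unit vectors `‖u - v‖² = 2 (1 - ⟪u, v⟫)`,
so `C_G(ρ, σ)` is the Euclidean distance of the images divided by `√2`, and the metric axioms are
inherited from the Euclidean space.
-/

open Matrix ComplexOrder

noncomputable def sG {N : ℕ} (ρ σ : Matrix (Fin N) (Fin N) ℂ) : ℝ :=
  (trace (ρ * σ)).re +
    Real.sqrt (1 - (trace (ρ * ρ)).re) * Real.sqrt (1 - (trace (σ * σ)).re)

noncomputable def CG {N : ℕ} (ρ σ : Matrix (Fin N) (Fin N) ℂ) : ℝ :=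
  Real.sqrt (1 - sG ρ σ)

lemma sqrt_one_sub_real_inner_eq_norm_sub_div_sqrt_two {E : Type*} [NormedAddCommGroup E]
    [InnerProductSpace ℝ E] {u v : E} (hu : ‖u‖ = 1) (hv : ‖v‖ = 1) :
    √(1 - inner ℝ u v) = ‖u - v‖ / √2 := by
  have : 1 - inner ℝ u v = ‖u - v‖ ^ 2 / 2 := by
    rw [norm_sub_sq_real, hu, hv]
    ring
  rw [this, Real.sqrt_div' _ zero_le_two, Real.sqrt_sq (norm_nonneg _)]

namespace Matrix

section

variable {𝕜 n : Type*} [RCLike 𝕜] [Fintype n] [DecidableEq n]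

lemma IsHermitian.trace_mul_self {A : Matrix n n 𝕜} (hA : A.IsHermitian) :
    (A * A).trace = ∑ i, (hA.eigenvalues i : 𝕜) ^ 2 := by
  conv_lhs => rw [hA.spectral_theorem, ← map_mul, Unitary.conjStarAlgAut_apply, trace_mul_cycle,
    Unitary.coe_star_mul_self, one_mul, diagonal_mul_diagonal, trace_diagonal]
  simp [sq]

lemma PosSemidef.re_trace_mul_self_le {A : Matrix n n 𝕜} (hA : A.PosSemidef) :
    RCLike.re (A * A).trace ≤ RCLike.re A.trace ^ 2 := by
  rw [hA.1.trace_mul_self, hA.1.trace_eq_sum_eigenvalues]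
  simp only [map_sum, ← RCLike.ofReal_pow, RCLike.ofReal_re]
  exact Finset.sum_sq_le_sq_sum_of_nonneg fun i _ => hA.eigenvalues_nonneg i

end

def entryVec {𝕜 n : Type*} (A : Matrix n n 𝕜) : EuclideanSpace 𝕜 (n × n) :=
  WithLp.toLp 2 fun p => A p.1 p.2

lemma entryVec_injective {𝕜 n : Type*} : Function.Injective (entryVec : Matrix n n 𝕜 → _) :=
  fun _ _ h => Matrix.ext fun i j => congr($h (i, j))

lemma IsHermitian.re_trace_mul_eq_real_inner_entryVec {𝕜 n : Type*} [RCLike 𝕜] [Fintype n]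
    (A : Matrix n n 𝕜) {B : Matrix n n 𝕜} (hB : B.IsHermitian) :
    RCLike.re (A * B).trace = inner ℝ A.entryVec B.entryVec := by
  simp only [PiLp.inner_apply, entryVec, real_inner_eq_re_inner, RCLike.inner_apply, trace,
    diag_apply, mul_apply, map_sum, Fintype.sum_prod_type]
  refine Finset.sum_congr rfl fun i _ => Finset.sum_congr rfl fun j _ => ?_
  rw [← hB.apply, ← RCLike.conj_re, map_mul, RCLike.star_def, RCLike.conj_conj, mul_comm]

end Matrix

noncomputable def superfidelityVec {N : ℕ} (ρ : Matrix (Fin N) (Fin N) ℂ) :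
    WithLp 2 (EuclideanSpace ℂ (Fin N × Fin N) × ℝ) :=
  WithLp.toLp 2 (ρ.entryVec, √(1 - (trace (ρ * ρ)).re))

section

variable {N : ℕ}

lemma superfidelityVec_injective : Function.Injective (superfidelityVec (N := N)) :=
  fun _ _ h => entryVec_injective congr(($h).ofLp.1)

lemma real_inner_superfidelityVec (ρ : Matrix (Fin N) (Fin N) ℂ) {σ : Matrix (Fin N) (Fin N) ℂ}
    (hσ : σ.IsHermitian) : inner ℝ (superfidelityVec ρ) (superfidelityVec σ) = sG ρ σ := by
  rw [superfidelityVec, superfidelityVec, WithLp.prod_inner_apply, sG,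
    ← hσ.re_trace_mul_eq_real_inner_entryVec, Real.inner_apply]
  rfl

lemma norm_superfidelityVec {ρ : Matrix (Fin N) (Fin N) ℂ} (hρ : ρ.PosSemidef)
    (hρ₁ : trace ρ = 1) :
    ‖superfidelityVec ρ‖ = 1 := by
  have hpurity : (trace (ρ * ρ)).re ≤ 1 := by
    simpa [hρ₁] using hρ.re_trace_mul_self_le
  rw [norm_eq_sqrt_real_inner, real_inner_superfidelityVec ρ hρ.1, sG,
    Real.mul_self_sqrt (sub_nonneg.2 hpurity), add_sub_cancel, Real.sqrt_one]

lemma CG_eq_dist_superfidelityVec {ρ σ : Matrix (Fin N) (Fin N) ℂ} (hρ : ρ.PosSemidef)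
    (hσ : σ.PosSemidef) (hρ₁ : trace ρ = 1) (hσ₁ : trace σ = 1) :
    CG ρ σ = dist (superfidelityVec ρ) (superfidelityVec σ) / √2 := by
  rw [CG, ← real_inner_superfidelityVec ρ hσ.1, dist_eq_norm,
    sqrt_one_sub_real_inner_eq_norm_sub_div_sqrt_two (norm_superfidelityVec hρ hρ₁)
      (norm_superfidelityVec hσ hσ₁)]

end

theorem CG_is_metric {N : ℕ} :
    (∀ (ρ σ : Matrix (Fin N) (Fin N) ℂ),
      ρ.PosSemidef → σ.PosSemidef → trace ρ = 1 → trace σ = 1 →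
        0 ≤ CG ρ σ) ∧
    (∀ (ρ σ : Matrix (Fin N) (Fin N) ℂ),
      ρ.PosSemidef → σ.PosSemidef → trace ρ = 1 → trace σ = 1 →
        (CG ρ σ = 0 ↔ ρ = σ)) ∧
    (∀ (ρ σ : Matrix (Fin N) (Fin N) ℂ),
      ρ.PosSemidef → σ.PosSemidef → trace ρ = 1 → trace σ = 1 →
        CG ρ σ = CG σ ρ) ∧
    (∀ (ρ σ τ : Matrix (Fin N) (Fin N) ℂ),
      ρ.PosSemidef → σ.PosSemidef → τ.PosSemidef →
      trace ρ = 1 → trace σ = 1 → trace τ = 1 →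
        CG ρ τ ≤ CG ρ σ + CG σ τ) := by
  refine ⟨fun ρ σ _ _ _ _ => Real.sqrt_nonneg _, ?_, ?_, ?_⟩
  · intro ρ σ hρ hσ hρ₁ hσ₁
    rw [CG_eq_dist_superfidelityVec hρ hσ hρ₁ hσ₁, div_eq_zero_iff, dist_eq_zero,
      superfidelityVec_injective.eq_iff, or_iff_left (Real.sqrt_ne_zero'.2 two_pos)]
  · intro ρ σ hρ hσ hρ₁ hσ₁
    rw [CG_eq_dist_superfidelityVec hρ hσ hρ₁ hσ₁, CG_eq_dist_superfidelityVec hσ hρ hσ₁ hρ₁,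
      dist_comm]
  · intro ρ σ τ hρ hσ hτ hρ₁ hσ₁ hτ₁
    rw [CG_eq_dist_superfidelityVec hρ hτ hρ₁ hτ₁, CG_eq_dist_superfidelityVec hρ hσ hρ₁ hσ₁,
      CG_eq_dist_superfidelityVec hσ hτ hσ₁ hτ₁, ← add_div]
    exact div_le_div_of_nonneg_right (dist_triangle _ _ _) (Real.sqrt_nonneg 2)
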